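/- If ξ ≤ 2⌊k/2⌋ + 1 or ξ ≤ 2, then the SGG-AC on any finite graph admits a Nash equilibrium whose number of buyers equals the minimum size of a k-dominating set (i.e., the price of stability is 1). -/

import Mathlib

/-!
Let the buyers form a minimum `k`-dominating set `D` which, among all minimum ones, has the
fewest members with another member of `D` within distance `k`, and let every other vertex rent
from a nearest buyer. A renter cannot gain, since buying alone is worth `b - p < b - a`. A buyer
`d` can only gain by renting from another buyer within distance `k`. But then minimality gives `d`
two private vertices `u`, `u'` (within `k` of `d` and of no other buyer) at distance `> k` from
each other: otherwise trading `d` for one private vertex would isolate it and lower the count. The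
geodesics from `d` to `u` and to `u'` supply `k + 1` vertices strictly closer to `d` than to any
other buyer, all of them followers of `d`, and `k + 1 ≥ ξ` followers make buying worth at least
`b - a`.
-/

open Classical in
/-- Utility of player `i` in the SGG with access costs (SGG-AC): `s i = i`
means `i` buys a good (getting `b - p` plus `a` per follower), `s i = j ≠ i`
means `i` wants to rent from `j` (getting `b - a` if `j` indeed buys,
`0` otherwise). -/
noncomputable def utilAC {V : Type} [Fintype V] (G : SimpleGraph V) (k : ℕ)
    (b p a : ℚ) (s : V → V) (i : V) : ℚ :=
  if s i = i then
    b - p + a * (Finset.univ.filter (fun j => j ≠ i ∧ s j = i)).card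
  else if s (s i) = s i then b - a
  else 0

open Finset

section Game

def followers {V : Type*} [Fintype V] [DecidableEq V] (s : V → V) (i : V) : Finset V :=
  {j | j ≠ i ∧ s j = i}

variable {V : Type} [Fintype V] {G : SimpleGraph V} {k : ℕ} {b p a : ℚ} {s : V → V} {i t : V}

lemma utilAC_of_rent (h : s i ≠ i) (h' : s (s i) = s i) : utilAC G k b p a s i = b - a := by
  rw [utilAC, if_neg h, if_pos h']

lemma utilAC_of_rent_from_non_buyer (h : s i ≠ i) (h' : s (s i) ≠ s i) :
    utilAC G k b p a s i = 0 := by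
  rw [utilAC, if_neg h, if_neg h']

variable [DecidableEq V]

def IsNashAC (G : SimpleGraph V) (k : ℕ) (b p a : ℚ) (s : V → V) : Prop :=
  ∀ i t, G.edist i t ≤ k → utilAC G k b p a (Function.update s i t) i ≤ utilAC G k b p a s i

lemma utilAC_of_buy (h : s i = i) : utilAC G k b p a s i = b - p + a * #(followers s i) := by
  rw [utilAC, if_pos h, followers, filter_congr_decidable]

lemma utilAC_update_le_of_buy (ha : 0 ≤ a) (hpb : p ≤ b) (hi : s i = i)
    (hfoll : t ≠ i → s t = t → p ≤ a * (#(followers s i) + 1)) :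
    utilAC G k b p a (Function.update s i t) i ≤ utilAC G k b p a s i := by
  have hF : 0 ≤ a * #(followers s i) := by positivity
  rw [utilAC_of_buy hi]
  by_cases hti : t = i
  · rw [hti, Function.update_eq_self_iff.2 hi.symm, utilAC_of_buy hi]
  have hs' : Function.update s i t (Function.update s i t i) = s t := by
    rw [Function.update_self, Function.update_of_ne hti]
  have hne : Function.update s i t i ≠ i := by rwa [Function.update_self]
  by_cases ht : s t = t
  · rw [utilAC_of_rent hne (by rw [hs', Function.update_self, ht])]
    linarith [hfoll hti ht]
  · rw [utilAC_of_rent_from_non_buyer hne (by rwa [hs', Function.update_self])]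
    linarith

lemma utilAC_update_le_of_rent (hap : a ≤ p) (hab : a ≤ b) (hs : ∀ j, s (s j) = s j)
    (hi : s i ≠ i) : utilAC G k b p a (Function.update s i t) i ≤ utilAC G k b p a s i := by
  rw [utilAC_of_rent hi (hs i)]
  by_cases hti : t = i
  · subst hti
    -- nobody follows the deviator, since everybody else points to a buyer
    have hnone : followers (Function.update s t t) t = ∅ := by
      refine filter_eq_empty_iff.2 fun j _ ⟨hjt, hj⟩ => hi ?_
      rw [Function.update_of_ne hjt] at hj
      rw [← hj, hs]
    rw [utilAC_of_buy (Function.update_self t t s), hnone]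
    simp only [card_empty, Nat.cast_zero, mul_zero, add_zero]
    linarith
  have hne : Function.update s i t i ≠ i := by rwa [Function.update_self]
  by_cases ht : Function.update s i t (Function.update s i t i) = Function.update s i t i
  · rw [utilAC_of_rent hne ht]
  · rw [utilAC_of_rent_from_non_buyer hne ht]
    linarith

lemma isNashAC_of_idempotent (ha : 0 ≤ a) (hap : a ≤ p) (hpb : p ≤ b)
    (hs : ∀ j, s (s j) = s j)
    (hfoll : ∀ i t, s i = i → t ≠ i → s t = t → G.edist i t ≤ k →
      p ≤ a * (#(followers s i) + 1)) :
    IsNashAC G k b p a s := by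
  intro i t hit
  by_cases hi : s i = i
  · exact utilAC_update_le_of_buy ha hpb hi fun hti ht => hfoll i t hi hti ht hit
  · exact utilAC_update_le_of_rent hap (hap.trans hpb) hs hi

end Game

namespace SimpleGraph

section Metric

variable {V : Type*} (G : SimpleGraph V)

lemma exists_geodesic_of_edist_eq_coe {u v : V} {m : ℕ} (h : G.edist u v = m) :
    ∃ g : ℕ → V, ∀ t ≤ m, G.edist u (g t) = t ∧ G.edist (g t) v = (m - t : ℕ) := by
  obtain ⟨p, rfl⟩ := G.exists_walk_of_edist_eq_coe h
  refine ⟨p.getVert, fun t ht => ?_⟩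
  have h₁ : G.edist u (p.getVert t) ≤ t := by
    simpa [ht] using G.edist_le (p.take t)
  have h₂ : G.edist (p.getVert t) v ≤ (p.length - t : ℕ) := by
    simpa using G.edist_le (p.drop t)
  have h₃ : (p.length : ℕ∞) ≤ G.edist u (p.getVert t) + G.edist (p.getVert t) v :=
    h ▸ G.edist_triangle
  obtain ⟨x, hx, hxt⟩ := ENat.le_natCast_iff.mp h₁
  obtain ⟨y, hy, hym⟩ := ENat.le_natCast_iff.mp h₂
  rw [hx, hy] at h₃ ⊢
  norm_cast at h₃ ⊢
  omega

lemma card_image_Icc_of_edist_eq [DecidableEq V] {g : ℕ → V} {d : V} {m : ℕ}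
    (hg : ∀ t ≤ m, G.edist d (g t) = t) (l : ℕ) : #((Icc l m).image g) = m + 1 - l := by
  rw [card_image_of_injOn, Nat.card_Icc]
  intro t₁ h₁ t₂ h₂ h
  have := hg t₁ (mem_Icc.1 h₁).2
  rw [show g t₁ = g t₂ from h, hg t₂ (mem_Icc.1 h₂).2] at this
  exact_mod_cast this.symm

end Metric

variable {V : Type*} (G : SimpleGraph V) (k : ℕ)

def IsKDominating (D : Finset V) : Prop :=
  ∀ v, ∃ d ∈ D, G.edist v d ≤ k

def IsKPrivate (D : Finset V) (d v : V) : Prop :=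
  G.edist v d ≤ k ∧ ∀ e ∈ D, e ≠ d → k < G.edist v e

variable {G k} {D : Finset V} {d u : V}

namespace IsKDominating

lemma exists_nearest (hD : G.IsKDominating k D) (v : V) :
    ∃ d ∈ D, ∀ e ∈ D, G.edist v d ≤ G.edist v e :=
  D.exists_min_image _ ⟨_, (hD v).choose_spec.1⟩

noncomputable def nearest (hD : G.IsKDominating k D) (v : V) : V :=
  (hD.exists_nearest v).choose

lemma nearest_mem (hD : G.IsKDominating k D) (v : V) : hD.nearest v ∈ D :=
  (hD.exists_nearest v).choose_spec.1

lemma edist_nearest_le_of_mem (hD : G.IsKDominating k D) {v e : V} (he : e ∈ D) :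
    G.edist v (hD.nearest v) ≤ G.edist v e :=
  (hD.exists_nearest v).choose_spec.2 e he

lemma edist_nearest_le (hD : G.IsKDominating k D) (v : V) : G.edist v (hD.nearest v) ≤ k :=
  have ⟨_, he, hve⟩ := hD v
  (hD.edist_nearest_le_of_mem he).trans hve

lemma nearest_eq_self_iff (hD : G.IsKDominating k D) {v : V} : hD.nearest v = v ↔ v ∈ D := by
  refine ⟨fun h => h ▸ hD.nearest_mem v, fun hv => ?_⟩
  have := hD.edist_nearest_le_of_mem (v := v) hv
  rw [edist_self, nonpos_iff_eq_zero, edist_eq_zero_iff] at this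
  exact this.symm

lemma nearest_nearest (hD : G.IsKDominating k D) (v : V) :
    hD.nearest (hD.nearest v) = hD.nearest v :=
  hD.nearest_eq_self_iff.2 (hD.nearest_mem v)

variable [DecidableEq V]

lemma of_erase_subset (hD : G.IsKDominating k D) {D' : Finset V} (hD' : D.erase d ⊆ D')
    (hpriv : ∀ v, G.IsKPrivate k D d v → ∃ e ∈ D', G.edist v e ≤ k) :
    G.IsKDominating k D' := by
  intro v
  obtain ⟨e, he, hve⟩ := hD v
  by_cases hed : e = d
  · subst hed
    by_cases hv : G.IsKPrivate k D e v
    · exact hpriv v hv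
    · obtain ⟨e', he', hne, hle⟩ : ∃ e' ∈ D, e' ≠ e ∧ G.edist v e' ≤ k := by
        simpa [IsKPrivate, hve] using hv
      exact ⟨e', hD' (mem_erase.2 ⟨hne, he'⟩), hle⟩
  · exact ⟨e, hD' (mem_erase.2 ⟨hed, he⟩), hve⟩

end IsKDominating

section NonIsolated

variable [DecidableEq V]

variable (G k) in
noncomputable def kNonIsolated (D : Finset V) : Finset V :=
  {d ∈ D | ∃ e ∈ D, e ≠ d ∧ G.edist d e ≤ k}

lemma kNonIsolated_insert_erase_subset (hu : G.IsKPrivate k D d u) :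
    G.kNonIsolated k (insert u (D.erase d)) ⊆ (G.kNonIsolated k D).erase d := by
  intro x hx
  simp only [kNonIsolated, mem_erase, mem_filter, mem_insert] at hx ⊢
  obtain ⟨hxD, e, heD, hex, hxe⟩ := hx
  have hxu : x ≠ u := by
    rintro rfl
    rcases heD with rfl | ⟨hed, heD⟩
    · exact hex rfl
    · exact (hu.2 e heD hed).not_ge hxe
  have heu : e ≠ u := by
    rintro rfl
    obtain ⟨hxd, hxD⟩ := hxD.resolve_left hxu
    exact (hu.2 x hxD hxd).not_ge (by rwa [edist_comm])
  obtain ⟨hxd, hxD⟩ := hxD.resolve_left hxu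
  exact ⟨hxd, hxD, e, (heD.resolve_left heu).2, hex, hxe⟩

variable (G k) in
def IsLexMinKDominating (D : Finset V) : Prop :=
  G.IsKDominating k D ∧ ∀ D', G.IsKDominating k D' →
    toLex (#D, #(G.kNonIsolated k D)) ≤ toLex (#D', #(G.kNonIsolated k D'))

variable (G k) in
lemma exists_isLexMinKDominating [Fintype V] : ∃ D, G.IsLexMinKDominating k D := by
  classical
  obtain ⟨D, hD, hmin⟩ := (univ.filter (G.IsKDominating k)).exists_min_image
    (fun D => toLex (#D, #(G.kNonIsolated k D)))
    ⟨univ, mem_filter.2 ⟨mem_univ _, fun v => ⟨v, mem_univ v, by simp⟩⟩⟩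
  exact ⟨D, (mem_filter.1 hD).2, fun D' hD' => hmin D' (by simpa using hD')⟩

namespace IsLexMinKDominating

lemma card_le (hD : G.IsLexMinKDominating k D) {D' : Finset V} (hD' : G.IsKDominating k D') :
    #D ≤ #D' := by
  have := hD.2 D' hD'
  rw [Prod.Lex.toLex_le_toLex] at this
  omega

lemma card_kNonIsolated_le (hD : G.IsLexMinKDominating k D) {D' : Finset V}
    (hD' : G.IsKDominating k D') (hc : #D' = #D) :
    #(G.kNonIsolated k D) ≤ #(G.kNonIsolated k D') := by
  have := hD.2 D' hD'
  rw [Prod.Lex.toLex_le_toLex] at this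
  omega

lemma exists_isKPrivate (hD : G.IsLexMinKDominating k D) (hd : d ∈ D) :
    ∃ v, G.IsKPrivate k D d v := by
  by_contra! h
  have := hD.card_le (hD.1.of_erase_subset subset_rfl fun v hv => absurd hv (h v))
  have := card_erase_lt_of_mem hd
  omega

lemma exists_isKPrivate_pair (hD : G.IsLexMinKDominating k D) (hd : d ∈ G.kNonIsolated k D) :
    ∃ u u', G.IsKPrivate k D d u ∧ G.IsKPrivate k D d u' ∧ k < G.edist u u' := by
  obtain ⟨hdD, e₀, he₀, he₀d, hde₀⟩ := mem_filter.1 hd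
  obtain ⟨u, hu⟩ := hD.exists_isKPrivate hdD
  by_contra! hnear
  have hud : u ≠ d := by
    rintro rfl
    exact (hu.2 e₀ he₀ he₀d).not_ge hde₀
  have huD : u ∉ D := fun h => (hu.2 u h hud).not_ge (by simp)
  have hcard : #(insert u (D.erase d)) = #D := by
    rw [card_insert_of_notMem (fun h => huD (mem_of_mem_erase h)), card_erase_add_one hdD]
  have hD' : G.IsKDominating k (insert u (D.erase d)) :=
    hD.1.of_erase_subset (subset_insert _ _) fun v hv =>
      ⟨u, mem_insert_self u _, hnear v u hv hu⟩
  have := hD.card_kNonIsolated_le hD' hcard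
  have := card_le_card (kNonIsolated_insert_erase_subset hu)
  have := card_erase_lt_of_mem hd
  omega

end IsLexMinKDominating

end NonIsolated

section VoronoiCell

variable [Fintype V] [DecidableEq V]

variable (G) in
noncomputable def voronoiCell (D : Finset V) (d : V) : Finset V :=
  {w | ∀ e ∈ D, e ≠ d → G.edist w d < G.edist w e}

lemma IsKPrivate.mem_voronoiCell_erase (hu : G.IsKPrivate k D d u) {w : V} {m t : ℕ}
    (hmk : m ≤ k) (ht : t ∈ Icc 1 m) (hdw : G.edist d w = t)
    (hwu : G.edist w u = (m - t : ℕ)) :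
    w ∈ (G.voronoiCell D d).erase d := by
  rw [mem_Icc] at ht
  refine mem_erase.2 ⟨?_, mem_filter.2 ⟨mem_univ w, fun e he hed => ?_⟩⟩
  · rintro rfl
    rw [edist_self] at hdw
    norm_cast at hdw
    omega
  have htri : G.edist u e ≤ (m - t : ℕ) + G.edist w e := by
    rw [← hwu, edist_comm (u := w)]
    exact G.edist_triangle
  have hk := (hu.2 e he hed).trans_le htri
  rw [edist_comm, hdw]
  generalize G.edist w e = x at hk ⊢
  induction x using ENat.recTopCoe with
  | top => exact ENat.natCast_lt_top t
  | coe x => norm_cast at hk ⊢; omega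

lemma IsKPrivate.le_card_voronoiCell_erase {u' : V} (hu : G.IsKPrivate k D d u)
    (hu' : G.IsKPrivate k D d u') (huu' : k < G.edist u u') :
    k + 1 ≤ #((G.voronoiCell D d).erase d) := by
  obtain ⟨m, hm, hmk⟩ := ENat.le_natCast_iff.1 hu.1
  obtain ⟨m', hm', hm'k⟩ := ENat.le_natCast_iff.1 hu'.1
  rw [edist_comm] at hm hm'
  obtain ⟨g, hg⟩ := G.exists_geodesic_of_edist_eq_coe hm
  obtain ⟨g', hg'⟩ := G.exists_geodesic_of_edist_eq_coe hm'
  have hsum : k + 1 ≤ m + m' := by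
    have : G.edist u u' ≤ G.edist u d + G.edist d u' := G.edist_triangle
    rw [edist_comm (u := u) (v := d), hm, hm'] at this
    exact_mod_cast Order.add_one_le_of_lt (huu'.trans_le this)
  -- the geodesics from `d` towards `u` and `u'` contribute `m` and `k + 1 - m` vertices
  set A := (Icc 1 m).image g
  set B := (Icc (m + m' - k) m').image g'
  have hA : #A = m + 1 - 1 := G.card_image_Icc_of_edist_eq (fun t ht => (hg t ht).1) 1
  have hB : #B = m' + 1 - (m + m' - k) :=
    G.card_image_Icc_of_edist_eq (fun t ht => (hg' t ht).1) _
  have hdisj : Disjoint A B := by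
    rw [Finset.disjoint_left]
    rintro _ hA' hB'
    obtain ⟨t, ht, rfl⟩ := mem_image.1 hA'
    obtain ⟨t', ht', he⟩ := mem_image.1 hB'
    rw [mem_Icc] at ht ht'
    have htt : t' = t := by
      have := (hg' t' ht'.2).1
      rw [he, (hg t ht.2).1] at this
      exact_mod_cast this.symm
    subst htt
    have : G.edist u u' ≤ G.edist u (g t') + G.edist (g t') u' := G.edist_triangle
    rw [edist_comm (u := u) (v := g t'), (hg t' ht.2).2, ← he, (hg' t' ht'.2).2] at this
    have := huu'.trans_le this
    norm_cast at this
    omega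
  have hsub : A ∪ B ⊆ (G.voronoiCell D d).erase d := by
    refine union_subset (image_subset_iff.2 fun t ht => ?_) (image_subset_iff.2 fun t ht => ?_)
    · have htm := (mem_Icc.1 ht).2
      exact hu.mem_voronoiCell_erase hmk ht (hg t htm).1 (hg t htm).2
    · obtain ⟨hlt, htm⟩ := mem_Icc.1 ht
      exact hu'.mem_voronoiCell_erase hm'k (mem_Icc.2 ⟨by omega, htm⟩) (hg' t htm).1
        (hg' t htm).2
  calc k + 1 = #A + #B := by omega
    _ = #(A ∪ B) := (card_union_of_disjoint hdisj).symm
    _ ≤ _ := card_le_card hsub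

lemma IsKDominating.nearest_eq_of_mem_voronoiCell (hD : G.IsKDominating k D) {v : V}
    (hd : d ∈ D) (hv : v ∈ G.voronoiCell D d) : hD.nearest v = d := by
  by_contra hne
  exact ((mem_filter.1 hv).2 _ (hD.nearest_mem v) hne).not_ge (hD.edist_nearest_le_of_mem hd)

lemma IsLexMinKDominating.le_card_followers (hD : G.IsLexMinKDominating k D)
    (hd : d ∈ G.kNonIsolated k D) : k + 1 ≤ #(followers hD.1.nearest d) := by
  obtain ⟨u, u', hu, hu', huu'⟩ := hD.exists_isKPrivate_pair hd
  refine (hu.le_card_voronoiCell_erase hu' huu').trans (card_le_card fun w hw => ?_)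
  obtain ⟨hwd, hw⟩ := mem_erase.1 hw
  exact mem_filter.2
    ⟨mem_univ w, hwd, hD.1.nearest_eq_of_mem_voronoiCell (mem_filter.1 hd).1 hw⟩

end VoronoiCell

end SimpleGraph

theorem sggac_pos_one_general {V : Type} [Fintype V] [DecidableEq V]
    (G : SimpleGraph V) (k ξ : ℕ) (hk : 1 ≤ k) (b p a : ℚ)
    (ha : 0 < a) (hap : a < p) (hpb : p < b)
    (hξ2 : p < a * (ξ + 1))
    (hξ : ξ ≤ 2 * (k / 2) + 1 ∨ ξ ≤ 2) :
    ∃ s : V → V,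
      (∀ i, G.edist i (s i) ≤ (k : ℕ∞)) ∧
      (∀ i t, G.edist i t ≤ (k : ℕ∞) →
        utilAC G k b p a (Function.update s i t) i ≤ utilAC G k b p a s i) ∧
      (∀ v : V, ∃ d, s d = d ∧ G.edist v d ≤ (k : ℕ∞)) ∧
      (∀ D : Finset V, (∀ v, ∃ d ∈ D, G.edist v d ≤ (k : ℕ∞)) →
        (Finset.univ.filter (fun i => s i = i)).card ≤ D.card) := by
  obtain ⟨D, hD⟩ := G.exists_isLexMinKDominating k
  have hξk : ξ ≤ k + 1 := by omega
  refine ⟨hD.1.nearest, hD.1.edist_nearest_le,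
    isNashAC_of_idempotent ha.le hap.le hpb.le hD.1.nearest_nearest ?_, fun v => ?_,
    fun D' hD' => ?_⟩
  · intro i t hi hti ht hit
    rw [hD.1.nearest_eq_self_iff] at hi ht
    have hF := hD.le_card_followers (mem_filter.2 ⟨hi, t, ht, hti, hit⟩)
    calc p ≤ a * (ξ + 1) := hξ2.le
      _ ≤ a * (#(followers hD.1.nearest i) + 1) := by gcongr; exact_mod_cast hξk.trans hF
  · obtain ⟨d, hd, hvd⟩ := hD.1 v
    exact ⟨d, hD.1.nearest_eq_self_iff.2 hd, hvd⟩
  · have hbuyers : univ.filter (fun i => hD.1.nearest i = i) = D := by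
      ext
      simp [hD.1.nearest_eq_self_iff]
    rw [hbuyers]
    exact hD.card_le hD'

/-- PoS of the SGG-AC is `1` when `ξ ≤ 2⌊k/2⌋ + 1` or `ξ ≤ 2`: there is a Nash
equilibrium whose set of buyers is a `k`-dominating set of minimum size. -/
theorem sggac_pos_one {V : Type} [Fintype V] [DecidableEq V]
    (G : SimpleGraph V) (k ξ : ℕ) (hk : 1 ≤ k) (b p a : ℚ)
    (ha : 0 < a) (hap : a < p) (hpb : p < b)
    (hξ1 : a * ξ < p) (hξ2 : p < a * (ξ + 1))
    (hξ : ξ ≤ 2 * (k / 2) + 1 ∨ ξ ≤ 2) :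
    ∃ s : V → V,
      (∀ i, G.edist i (s i) ≤ (k : ℕ∞)) ∧
      (∀ i t, G.edist i t ≤ (k : ℕ∞) →
        utilAC G k b p a (Function.update s i t) i ≤ utilAC G k b p a s i) ∧
      (∀ v : V, ∃ d, s d = d ∧ G.edist v d ≤ (k : ℕ∞)) ∧
      (∀ D : Finset V, (∀ v, ∃ d ∈ D, G.edist v d ≤ (k : ℕ∞)) →
        (Finset.univ.filter (fun i => s i = i)).card ≤ D.card) :=
  sggac_pos_one_general G k ξ hk b p a ha hap hpb hξ2 hξ
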